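/- arXiv:1706.00585 — 10 statements merged into one kernel-verified Lean document; each statement's English description precedes it below -/
import Mathlib

section
/- The rules (p; H ← B, ∼p) and (H ← B, ∼p) are RE-equivalent, i.e., they have the same set of RE-models. -/
/-- A rule ⟨H,B⟩ over atoms `V`, split into positive/negative head/body atoms. -/
structure Rule (V : Type) where
  Hp : Set V
  Hn : Set V
  Bp : Set V
  Bn : Set V

namespace Rule
variable {V : Type}

/-- `I` satisfies the reduct `π^J`: the reduct is `H⁺ ← B⁺` when `B⁻ ∩ J = ∅` and
`H⁻ ⊆ J`, and the canonical tautology otherwise. -/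
def isRE (π : Rule V) (I J : Set V) : Prop :=
  (π.Bn ∩ J = ∅ ∧ π.Hn ⊆ J) → (π.Bp ⊆ I → (π.Hp ∩ I).Nonempty)

/-- Classical satisfaction `J ⊨ π`. -/
def clSat (π : Rule V) (J : Set V) : Prop :=
  (π.Bp ⊆ J ∧ π.Bn ∩ J = ∅) → ((π.Hp ∩ J).Nonempty ∨ ¬ π.Hn ⊆ J)

/-- `⟨I,J⟩` is an SE-model of `π`. -/
def isSE (π : Rule V) (I J : Set V) : Prop := π.clSat J ∧ π.isRE I J

/-- The set of RE-models of a rule. -/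
def REset (π : Rule V) : Set (Set V × Set V) :=
  {x | x.1 ⊆ x.2 ∧ π.isRE x.1 x.2}

/-- The set of SE-models of a rule. -/
def SEset (π : Rule V) : Set (Set V × Set V) :=
  {x | x.1 ⊆ x.2 ∧ π.isSE x.1 x.2}

end Rule

/-- RE-models of a program (set of rules). -/
def REsetP {V : Type} (P : Set (Rule V)) : Set (Set V × Set V) :=
  {x | x.1 ⊆ x.2 ∧ ∀ π ∈ P, π.isRE x.1 x.2}

/-- SE-models of a program. -/
def SEsetP {V : Type} (P : Set (Rule V)) : Set (Set V × Set V) :=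
  {x | x.1 ⊆ x.2 ∧ ∀ π ∈ P, π.isSE x.1 x.2}

/-- The rules (p; H ← B, ∼p) and (H ← B, ∼p) are RE-equivalent. -/
theorem stmt1 {V : Type} (Hp Hn Bp Bn : Set V) (p : V) :
    (Rule.mk (Hp ∪ {p}) Hn Bp (Bn ∪ {p})).REset =
      (Rule.mk Hp Hn Bp (Bn ∪ {p})).REset := by
  ext ⟨I,J⟩
  simp only [Rule.REset, Rule.isRE, Set.mem_setOf_eq]
  constructor <;> rintro ⟨hIJ, h⟩ <;> refine ⟨hIJ, fun hc hB => ?_⟩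
  · have hpJ : p ∉ J := fun hp => Set.eq_empty_iff_forall_notMem.mp hc.1 p ⟨Or.inr rfl, hp⟩
    obtain ⟨x, hx1, hx2⟩ := h hc hB
    rcases hx1 with h1 | h1
    · exact ⟨x, h1, hx2⟩
    · exact absurd (hIJ hx2) (h1 ▸ hpJ)
  · obtain ⟨x, hx1, hx2⟩ := h hc hB
    exact ⟨x, Or.inl hx1, hx2⟩
end

section
/- The rules (H; ∼p ← p, B) and (H ← p, B) are RE-equivalent, i.e., they have the same set of RE-models. -/
/-- The rules (H; ∼p ← p, B) and (H ← p, B) are RE-equivalent. -/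
theorem stmt2 {V : Type} (Hp Hn Bp Bn : Set V) (p : V) :
    (Rule.mk Hp (Hn ∪ {p}) (Bp ∪ {p}) Bn).REset =
      (Rule.mk Hp Hn (Bp ∪ {p}) Bn).REset := by
  ext ⟨I, J⟩
  simp only [Rule.REset, Rule.isRE, Set.mem_setOf_eq]
  constructor
  · rintro ⟨hIJ, h⟩
    refine ⟨hIJ, fun ⟨hbn, hhn⟩ hb => ?_⟩
    have hp : p ∈ I := hb (Or.inr rfl)
    exact h ⟨hbn, Set.union_subset hhn (by simpa using hIJ hp)⟩ hb
  · rintro ⟨hIJ, h⟩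
    refine ⟨hIJ, fun ⟨hbn, hhn⟩ hb => ?_⟩
    exact h ⟨hbn, fun x hx => hhn (Or.inl hx)⟩ hb
end

section
/- Every rule π is RE-equivalent to its RE-canonical form can_RE(π), defined as follows: if any of H⁺ ∩ B⁺, H⁻ ∩ B⁻, B⁺ ∩ B⁻ is non-empty then can_RE(π) is the canonical tautology; otherwise can_RE(π) is the rule (H⁺ \ B⁻); ∼(H⁻ \ B⁺) ← B⁺, ∼B⁻. -/
open Classical in
/-- The RE-canonical form of a rule, relative to the canonical-tautology atom pτ. -/
noncomputable def canRE {V : Type} (pτ : V) (π : Rule V) : Rule V :=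
  if (π.Hp ∩ π.Bp ≠ ∅ ∨ π.Hn ∩ π.Bn ≠ ∅ ∨ π.Bp ∩ π.Bn ≠ ∅) then
    Rule.mk {pτ} ∅ {pτ} ∅
  else
    Rule.mk (π.Hp \ π.Bn) (π.Hn \ π.Bp) π.Bp π.Bn

/-- Every rule is RE-equivalent to its RE-canonical form. -/
theorem stmt3 {V : Type} [Fintype V] (pτ : V) (π : Rule V) :
    π.REset = (canRE pτ π).REset := by
  ext ⟨I, J⟩
  simp only [Rule.REset, Set.mem_setOf_eq]
  unfold canRE
  split_ifs with h
  · constructor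
    · rintro ⟨hIJ, -⟩
      exact ⟨hIJ, fun _ hsub => ⟨pτ, rfl, hsub rfl⟩⟩
    · rintro ⟨hIJ, -⟩
      refine ⟨hIJ, ?_⟩
      rintro ⟨hBnJ, hHnJ⟩ hBpI
      rcases h with h | h | h
      · obtain ⟨p, hp1, hp2⟩ := Set.nonempty_iff_ne_empty.mpr h
        exact ⟨p, hp1, hBpI hp2⟩
      · obtain ⟨p, hp1, hp2⟩ := Set.nonempty_iff_ne_empty.mpr h
        exact absurd hBnJ (Set.nonempty_iff_ne_empty.mp ⟨p, hp2, hHnJ hp1⟩)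
      · obtain ⟨p, hp1, hp2⟩ := Set.nonempty_iff_ne_empty.mpr h
        exact absurd hBnJ (Set.nonempty_iff_ne_empty.mp ⟨p, hp2, hIJ (hBpI hp1)⟩)
  · constructor
    · rintro ⟨hIJ, hRE⟩
      refine ⟨hIJ, ?_⟩
      rintro ⟨hBnJ, hHnJ⟩ hBpI
      obtain ⟨p, hp1, hp2⟩ := hRE ⟨hBnJ, fun q hq => by
        by_cases hqB : q ∈ π.Bp
        · exact hIJ (hBpI hqB)
        · exact hHnJ ⟨hq, hqB⟩⟩ hBpI
      refine ⟨p, ⟨hp1, fun hpBn => ?_⟩, hp2⟩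
      exact absurd hBnJ (Set.nonempty_iff_ne_empty.mp ⟨p, hpBn, hIJ hp2⟩)
    · rintro ⟨hIJ, hRE⟩
      refine ⟨hIJ, ?_⟩
      rintro ⟨hBnJ, hHnJ⟩ hBpI
      obtain ⟨p, hp1, hp2⟩ := hRE ⟨hBnJ, fun q hq => hHnJ hq.1⟩ hBpI
      exact ⟨p, hp1.1, hp2⟩
end

section
/- For any set ℳ of three-valued interpretations over a finite set of atoms 𝒜, there exists a logic program 𝒫 (set of rules) such that the set of RE-models of 𝒫 (the intersection over its rules of their RE-model sets) is exactly ℳ. -/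
/-- The excluding rule for an interpretation `⟨I,J⟩`. -/
def exRule {V : Type} (x : Set V × Set V) : Rule V :=
  ⟨x.1ᶜ, x.2, x.1, x.2ᶜ⟩

lemma exRule_spec {V : Type} (x y : Set V × Set V) (hy : y.1 ⊆ y.2) :
    ¬ (exRule x).isRE y.1 y.2 ↔ y = x := by
  constructor
  · intro h
    simp only [Rule.isRE, exRule, not_forall] at h
    obtain ⟨⟨h1, h2⟩, h3, h4⟩ := h
    have hJ : y.2 = x.2 := by
      apply Set.Subset.antisymm _ h2
      intro a ha
      by_contra hc
      exact Set.eq_empty_iff_forall_notMem.mp h1 a ⟨hc, ha⟩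
    have hI : y.1 = x.1 := by
      apply Set.Subset.antisymm _ h3
      intro a ha
      by_contra hc
      exact h4 ⟨a, hc, ha⟩
    exact Prod.ext hI hJ
  · rintro rfl
    simp only [Rule.isRE, exRule, not_forall]
    refine ⟨⟨?_, le_refl _⟩, le_refl _, ?_⟩
    · ext a; simp
    · rintro ⟨a, ha, ha'⟩; exact ha ha'

/-- Every set of three-valued interpretations is the set of RE-models of some program. -/
theorem stmt5 {V : Type} [Fintype V] (M : Set (Set V × Set V))
    (hM : ∀ x ∈ M, x.1 ⊆ x.2) :
    ∃ P : Set (Rule V), REsetP P = M := by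
  refine ⟨exRule '' {x | x ∉ M ∧ x.1 ⊆ x.2}, ?_⟩
  ext y
  simp only [REsetP, Set.mem_setOf_eq, Set.mem_image]
  constructor
  · rintro ⟨hy, h⟩
    by_contra hyM
    exact (exRule_spec y y hy).mpr rfl (h _ ⟨y, ⟨hyM, hy⟩, rfl⟩)
  · intro hyM
    refine ⟨hM y hyM, ?_⟩
    rintro π ⟨x, ⟨hx, _⟩, rfl⟩
    by_contra h
    exact hx ((exRule_spec x y (hM y hyM)).mp h ▸ hyM)
end

section
/- If two rules are RE-equivalent then they are SE-equivalent. Moreover, a rule is RE-tautological if and only if it is SE-tautological. -/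
/-- RE-equivalent rules are SE-equivalent; a rule is RE-tautological iff it is
SE-tautological. -/
theorem stmt7 {V : Type} [Fintype V] :
    (∀ π σ : Rule V, π.REset = σ.REset → π.SEset = σ.SEset) ∧
    (∀ π : Rule V,
      π.REset = {x : Set V × Set V | x.1 ⊆ x.2} ↔
      π.SEset = {x : Set V × Set V | x.1 ⊆ x.2}) := by
  have key : ∀ π : Rule V, ∀ J : Set V, π.clSat J ↔ π.isRE J J := by
    intro π J
    constructor
    · intro h ⟨hb, hn⟩ hp
      rcases h ⟨hp, hb⟩ with h1 | h2
      · exact h1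
      · exact absurd hn h2
    · intro h ⟨hp, hb⟩
      by_cases hn : π.Hn ⊆ J
      · exact Or.inl (h ⟨hb, hn⟩ hp)
      · exact Or.inr hn
  have mem : ∀ π : Rule V, ∀ x : Set V × Set V,
      x ∈ π.SEset ↔ (x ∈ π.REset ∧ (x.2, x.2) ∈ π.REset) := by
    intro π x
    simp only [Rule.SEset, Rule.REset, Rule.isSE, Set.mem_setOf_eq]
    constructor
    · rintro ⟨h1, h2, h3⟩
      exact ⟨⟨h1, h3⟩, subset_rfl, (key π x.2).mp h2⟩
    · rintro ⟨⟨h1, h3⟩, _, h4⟩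
      exact ⟨h1, (key π x.2).mpr h4, h3⟩
  constructor
  · intro π σ h
    ext x
    rw [mem π x, mem σ x, h]
  · intro π
    constructor
    · intro h
      ext x
      rw [mem π x, h]
      simp only [Set.mem_setOf_eq]
      tauto
    · intro h
      ext x
      simp only [Rule.REset, Set.mem_setOf_eq]
      constructor
      · exact fun hx => hx.1
      · intro hx
        have : x ∈ π.SEset := by rw [h]; exact hx
        exact ⟨hx, this.2.2⟩
end

section
/- RR-equivalence is strictly stronger than RMR-equivalence: (1) if 𝒫 ≡_RR 𝒬 then 𝒫 ≡_RMR 𝒬; (2) there exist programs that are RMR-equivalent but not RR-equivalent (e.g., {p.} and {p., p ← q.}). -/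
/-- The canonical tautology pτ ← pτ. -/
def tauRule {V : Type} (pt : V) : Rule V := Rule.mk {pt} ∅ {pt} ∅

/-- The family {RE(π) : π ∈ 𝒫 ∪ {τ}}. -/
def REfam {V : Type} (pt : V) (P : Set (Rule V)) : Set (Set (Set V × Set V)) :=
  Rule.REset '' (P ∪ {tauRule pt})

/-- The ⊆-minimal elements of a family of sets. -/
def minOf {α : Type} (S : Set (Set α)) : Set (Set α) :=
  {A ∈ S | ∀ B ∈ S, B ⊆ A → B = A}

section Aux
variable {V : Type}

def rA (p : V) : Rule V := ⟨{p}, ∅, ∅, ∅⟩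
def rB (p q : V) : Rule V := ⟨{p}, ∅, {q}, ∅⟩

lemma mem_rA {p : V} (x : Set V × Set V) :
    x ∈ (rA p).REset ↔ x.1 ⊆ x.2 ∧ p ∈ x.1 := by
  simp [rA, Rule.REset, Rule.isRE, Set.singleton_inter_nonempty]

lemma mem_rB {p q : V} (x : Set V × Set V) :
    x ∈ (rB p q).REset ↔ x.1 ⊆ x.2 ∧ (q ∈ x.1 → p ∈ x.1) := by
  simp [rB, Rule.REset, Rule.isRE, Set.singleton_inter_nonempty,
    Set.singleton_subset_iff]

lemma mem_tau {pt : V} (x : Set V × Set V) :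
    x ∈ (tauRule pt).REset ↔ x.1 ⊆ x.2 := by
  simp only [tauRule, Rule.REset, Rule.isRE, Set.empty_inter, Set.empty_subset,
    Set.mem_setOf_eq, Set.singleton_subset_iff, Set.singleton_inter_nonempty,
    and_iff_left_iff_imp]
  intro _ _ h
  exact h

lemma AsubB {p q : V} : (rA p).REset ⊆ (rB p q).REset := by
  intro x hx
  rw [mem_rA] at hx
  rw [mem_rB]
  exact ⟨hx.1, fun _ => hx.2⟩

lemma BsubT {p q pt : V} : (rB p q).REset ⊆ (tauRule pt).REset := by
  intro x hx
  rw [mem_rB] at hx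
  rw [mem_tau]
  exact hx.1

-- (∅,∅) ∈ B \ A
lemma wit1B {p q : V} : ((∅, ∅) : Set V × Set V) ∈ (rB p q).REset := by
  rw [mem_rB]; simp
lemma wit1A {p : V} : ((∅, ∅) : Set V × Set V) ∉ (rA p).REset := by
  rw [mem_rA]; simp

-- ({q},{q}) ∈ T \ B (and ∉ A)
lemma wit2T {pt q : V} : (({q}, {q}) : Set V × Set V) ∈ (tauRule pt).REset := by
  rw [mem_tau]
lemma wit2B {p q : V} (hpq : p ≠ q) : (({q}, {q}) : Set V × Set V) ∉ (rB p q).REset := by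
  rw [mem_rB]; simp [hpq]
lemma wit2A {p q : V} (hpq : p ≠ q) : (({q}, {q}) : Set V × Set V) ∉ (rA p).REset := by
  rw [mem_rA]; simp [hpq]

lemma AsubT {p pt : V} : (rA p).REset ⊆ (tauRule pt).REset := by
  intro x hx
  rw [mem_rA] at hx
  rw [mem_tau]
  exact hx.1

lemma famP {pt p : V} :
    REfam pt {rA p} = {(rA p).REset, (tauRule pt).REset} := by
  ext X
  simp [REfam]
  tauto

lemma famQ {pt p q : V} :
    REfam pt {rA p, rB p q} =
      {(rA p).REset, (rB p q).REset, (tauRule pt).REset} := by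
  ext X
  simp [REfam]
  tauto

lemma minP {pt p q : V} (hpq : p ≠ q) :
    minOf (REfam pt (({rA p} : Set (Rule V)))) = {(rA p).REset} := by
  rw [famP]
  ext X
  constructor
  · rintro ⟨hX, hmin⟩
    rcases hX with rfl | rfl
    · rfl
    · exfalso
      have := hmin (rA p).REset (Or.inl rfl) AsubT
      exact wit2A hpq (this ▸ wit2T)
  · rintro rfl
    refine ⟨Or.inl rfl, ?_⟩
    rintro Y (rfl | rfl) hY
    · rfl
    · exact absurd (hY wit2T) (wit2A hpq)

lemma minQ {pt p q : V} (hpq : p ≠ q) :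
    minOf (REfam pt (({rA p, rB p q} : Set (Rule V)))) = {(rA p).REset} := by
  rw [famQ]
  ext X
  constructor
  · rintro ⟨hX, hmin⟩
    rcases hX with rfl | rfl | rfl
    · rfl
    · exfalso
      have := hmin (rA p).REset (Or.inl rfl) AsubB
      exact wit1A (this ▸ wit1B)
    · exfalso
      have := hmin (rA p).REset (Or.inl rfl) AsubT
      exact wit2A hpq (this ▸ wit2T)
  · rintro rfl
    refine ⟨Or.inl rfl, ?_⟩
    rintro Y (rfl | rfl | rfl) hY
    · rfl
    · exact absurd (hY wit1B) wit1A
    · exact absurd (hY wit2T) (wit2A hpq)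

end Aux

/-- RR-equivalence implies RMR-equivalence, but not conversely. -/
theorem stmt12 {V : Type} [Fintype V] (pt p q : V)
    (hpq : p ≠ q) (hp : p ≠ pt) (hq : q ≠ pt) :
    (∀ P Q : Set (Rule V),
        REfam pt P = REfam pt Q → minOf (REfam pt P) = minOf (REfam pt Q)) ∧
    (∃ P Q : Set (Rule V),
        minOf (REfam pt P) = minOf (REfam pt Q) ∧ REfam pt P ≠ REfam pt Q) := by
  constructor
  · intro P Q h
    rw [h]
  · refine ⟨{rA p}, {rA p, rB p q}, ?_, ?_⟩
    · rw [minP hpq, minQ hpq]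
    · intro h
      have hB : (rB p q).REset ∈ REfam pt ({rA p} : Set (Rule V)) := by
        rw [h, famQ]; exact Or.inr (Or.inl rfl)
      rw [famP] at hB
      rcases hB with hB | hB
      · exact wit1A (hB ▸ wit1B)
      · exact wit2B hpq (hB ▸ wit2T)
end

section
/- SE-equivalence does not imply RE-equivalence: the programs {∼p.} (the negative fact with head {∼p} and empty body) and {← p.} (the constraint with empty head and body {p}) have the same SE-models but different RE-models. -/
/-- The programs {∼p.} and {← p.} have the same SE-models but different RE-models. -/
theorem stmt13 {V : Type} (p : V) :
    (Rule.mk ∅ {p} ∅ ∅).SEset = (Rule.mk ∅ ∅ {p} ∅).SEset ∧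
    (Rule.mk ∅ {p} ∅ ∅).REset ≠ (Rule.mk ∅ ∅ {p} ∅).REset := by
  constructor
  · ext ⟨I, J⟩
    simp only [Rule.SEset, Rule.isSE, Rule.clSat, Rule.isRE, Set.mem_setOf_eq]
    simp [Set.subset_def, Set.eq_empty_iff_forall_notMem, Set.Nonempty]
    intro hIJ h hpI
    exact h (hIJ p hpI)
  · intro h
    have : ((∅ : Set V), ({p} : Set V)) ∈ (Rule.mk ∅ ∅ {p} ∅).REset := by
      simp [Rule.REset, Rule.isRE, Set.subset_def]
    rw [← h] at this
    simp [Rule.REset, Rule.isRE, Set.eq_empty_iff_forall_notMem] at this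
end

section
/- If π and σ are two distinct abolishing rules, or an abolishing rule and a constraint, then π and σ are not RE-equivalent. -/
/-- π is a constraint: empty head and B⁺ ∩ B⁻ = ∅. -/
def isConstraint {V : Type} (π : Rule V) : Prop :=
  π.Hp = ∅ ∧ π.Hn = ∅ ∧ π.Bp ∩ π.Bn = ∅

/-- π is abolishing: H⁺ = ∅, H⁻ ≠ ∅ and H⁻, B⁺, B⁻ pairwise disjoint. -/
def isAbolishing {V : Type} (π : Rule V) : Prop :=
  π.Hp = ∅ ∧ π.Hn ≠ ∅ ∧ π.Hn ∩ π.Bp = ∅ ∧ π.Hn ∩ π.Bn = ∅ ∧ π.Bp ∩ π.Bn = ∅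

lemma aux_bad_iff {V : Type} (π : Rule V) (hπ : π.Hp = ∅) (I J : Set V) :
    π.isRE I J ↔ ¬ (π.Bn ∩ J = ∅ ∧ π.Hn ⊆ J ∧ π.Bp ⊆ I) := by
  unfold Rule.isRE
  rw [hπ]
  simp only [Set.empty_inter, Set.not_nonempty_empty]
  tauto

lemma aux_eq {V : Type} (π σ : Rule V)
    (hπp : π.Hp = ∅) (hσp : σ.Hp = ∅)
    (d1 : π.Hn ∩ π.Bp = ∅) (d2 : π.Hn ∩ π.Bn = ∅) (d3 : π.Bp ∩ π.Bn = ∅)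
    (e1 : σ.Hn ∩ σ.Bp = ∅) (e2 : σ.Hn ∩ σ.Bn = ∅) (e3 : σ.Bp ∩ σ.Bn = ∅)
    (hre : π.REset = σ.REset) : π = σ := by
  have key : ∀ I J : Set V, I ⊆ J →
      ((π.Bn ∩ J = ∅ ∧ π.Hn ⊆ J ∧ π.Bp ⊆ I) ↔ (σ.Bn ∩ J = ∅ ∧ σ.Hn ⊆ J ∧ σ.Bp ⊆ I)) := by
    intro I J hIJ
    have h := Set.ext_iff.mp hre (I, J)
    simp only [Rule.REset, Set.mem_setOf_eq, aux_bad_iff π hπp, aux_bad_iff σ hσp] at h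
    tauto
  have dπ : π.Bn ∩ (π.Hn ∪ π.Bp) = ∅ := by
    rw [Set.inter_union_distrib_left, Set.inter_comm π.Bn π.Hn, d2,
      Set.inter_comm π.Bn π.Bp, d3, Set.union_empty]
  have dσ : σ.Bn ∩ (σ.Hn ∪ σ.Bp) = ∅ := by
    rw [Set.inter_union_distrib_left, Set.inter_comm σ.Bn σ.Hn, e2,
      Set.inter_comm σ.Bn σ.Bp, e3, Set.union_empty]
  -- canonical bad pairs
  have hπbad : σ.Bn ∩ (π.Hn ∪ π.Bp) = ∅ ∧ σ.Hn ⊆ π.Hn ∪ π.Bp ∧ σ.Bp ⊆ π.Bp :=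
    (key π.Bp (π.Hn ∪ π.Bp) Set.subset_union_right).mp
      ⟨dπ, Set.subset_union_left, subset_rfl⟩
  have hσbad : π.Bn ∩ (σ.Hn ∪ σ.Bp) = ∅ ∧ π.Hn ⊆ σ.Hn ∪ σ.Bp ∧ π.Bp ⊆ σ.Bp :=
    (key σ.Bp (σ.Hn ∪ σ.Bp) Set.subset_union_right).mpr
      ⟨dσ, Set.subset_union_left, subset_rfl⟩
  have hBp : π.Bp = σ.Bp := Set.Subset.antisymm hσbad.2.2 hπbad.2.2
  have hHn : π.Hn = σ.Hn := by
    ext x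
    constructor
    · intro hx
      rcases hσbad.2.1 hx with h' | h'
      · exact h'
      · exact absurd ⟨hx, hBp ▸ h'⟩ (Set.eq_empty_iff_forall_notMem.mp d1 x)
    · intro hx
      rcases hπbad.2.1 hx with h' | h'
      · exact h'
      · exact absurd ⟨hx, hBp.symm ▸ h'⟩ (Set.eq_empty_iff_forall_notMem.mp e1 x)
  have hBn : π.Bn = σ.Bn := by
    ext x
    by_contra hx
    -- wlog-ish: handle both directions
    have gen : ∀ (τ ρ : Rule V), τ.Hn = ρ.Hn → τ.Bp = ρ.Bp →
        ρ.Bn ∩ (τ.Hn ∪ τ.Bp) = ∅ → τ.Bn ∩ (τ.Hn ∪ τ.Bp) = ∅ →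
        (∀ I J : Set V, I ⊆ J →
          ((τ.Bn ∩ J = ∅ ∧ τ.Hn ⊆ J ∧ τ.Bp ⊆ I) ↔ (ρ.Bn ∩ J = ∅ ∧ ρ.Hn ⊆ J ∧ ρ.Bp ⊆ I))) →
        x ∈ τ.Bn → x ∉ ρ.Bn → False := by
      intro τ ρ hH hB hρd hτd hkey hxτ hxρ
      set J : Set V := (τ.Hn ∪ τ.Bp) ∪ {x} with hJ
      have hτ : ¬ (τ.Bn ∩ J = ∅ ∧ τ.Hn ⊆ J ∧ τ.Bp ⊆ τ.Bp) := by
        intro ⟨h1, _, _⟩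
        exact Set.eq_empty_iff_forall_notMem.mp h1 x ⟨hxτ, Or.inr rfl⟩
      apply hτ
      refine (hkey τ.Bp J (fun y hy => Or.inl (Or.inr hy))).mpr ?_
      refine ⟨?_, ?_, hB.ge⟩
      · rw [hJ, Set.inter_union_distrib_left, hρd, Set.empty_union]
        exact Set.eq_empty_iff_forall_notMem.mpr fun y ⟨hy1, hy2⟩ => by
          rw [Set.mem_singleton_iff] at hy2; exact hxρ (hy2 ▸ hy1)
      · exact fun y hy => Or.inl (Or.inl (hH ▸ hy))
    rw [iff_iff_implies_and_implies, not_and_or] at hx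
    rcases hx with hx | hx <;> rw [Classical.not_imp] at hx <;> obtain ⟨h1, h2⟩ := hx
    · exact gen π σ hHn hBp hπbad.1 dπ key h1 h2
    · exact gen σ π hHn.symm hBp.symm hσbad.1 dσ (fun I J hIJ => (key I J hIJ).symm) h1 h2
  cases π; cases σ
  simp_all

/-- Two different abolishing rules, or an abolishing rule and a constraint,
are never RE-equivalent. -/
theorem stmt14 {V : Type} [Fintype V] (π σ : Rule V)
    (h : (isAbolishing π ∧ isAbolishing σ ∧ π ≠ σ) ∨ (isAbolishing π ∧ isConstraint σ)) :
    π.REset ≠ σ.REset := by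
  intro hre
  rcases h with ⟨hπ, hσ, hne⟩ | ⟨hπ, hσ⟩
  · obtain ⟨p1, p2, p3, p4, p5⟩ := hπ
    obtain ⟨q1, q2, q3, q4, q5⟩ := hσ
    exact hne (aux_eq π σ p1 q1 p3 p4 p5 q3 q4 q5 hre)
  · obtain ⟨p1, p2, p3, p4, p5⟩ := hπ
    obtain ⟨q1, q2, q3⟩ := hσ
    have heq := aux_eq π σ p1 q1 p3 p4 p5 (by simp [q2]) (by simp [q2]) q3 hre
    exact p2 (by rw [heq]; exact q2)
end

section
/- Let π be a rule, p an atom and ⟨I,J⟩ a three-valued interpretation (I ⊆ J). Then ⟨I \ {p}, J ∪ {p}⟩ is NOT an RE-model of π if and only if: (1) neither p nor ∼p occurs in the body B of π; (2) ⟨I,J⟩ is an RE-model of B (i.e., B⁺ ⊆ I and B⁻ ∩ J = ∅); and (3) ⟨I,J⟩ is not an RE-model of any literal in H \ {p, ∼p} (i.e., (H⁺ \ {p}) ∩ I = ∅ and (H⁻ \ {p}) ⊆ J). -/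
/-- ⟨I \ {p}, J ∪ {p}⟩ fails to be an RE-model of π iff neither p nor ∼p occurs
in the body, ⟨I,J⟩ is an RE-model of the body, and ⟨I,J⟩ is not an RE-model of
any literal in H \ {p, ∼p}. -/
theorem stmt16 {V : Type} (π : Rule V) (p : V) (I J : Set V) (hIJ : I ⊆ J) :
    ¬ π.isRE (I \ {p}) (J ∪ {p}) ↔
      ((p ∉ π.Bp ∧ p ∉ π.Bn) ∧
       (π.Bp ⊆ I ∧ π.Bn ∩ J = ∅) ∧
       ((π.Hp \ {p}) ∩ I = ∅ ∧ (π.Hn \ {p}) ⊆ J)) := by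
  unfold Rule.isRE
  push_neg
  constructor
  · rintro ⟨⟨h1, h2⟩, h3, h4⟩
    have hpB : p ∉ π.Bp := fun hp => (h3 hp).2 rfl
    have hpN : p ∉ π.Bn := fun hp => by
      have : p ∈ π.Bn ∩ (J ∪ {p}) := ⟨hp, Or.inr rfl⟩
      rw [h1] at this; exact this
    refine ⟨⟨hpB, hpN⟩, ⟨fun x hx => (h3 hx).1, ?_⟩, ?_, ?_⟩
    · ext x
      simp only [Set.mem_inter_iff, Set.mem_empty_iff_false, iff_false, not_and]
      intro hx hxJ
      have : x ∈ π.Bn ∩ (J ∪ {p}) := ⟨hx, Or.inl hxJ⟩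
      rw [h1] at this; exact this
    · ext x
      simp only [Set.mem_inter_iff, Set.mem_diff, Set.mem_singleton_iff,
        Set.mem_empty_iff_false, iff_false, not_and]
      rintro ⟨hxH, hxp⟩ hxI
      have : x ∈ π.Hp ∩ (I \ {p}) := ⟨hxH, hxI, hxp⟩
      rw [h4] at this; exact this
    · rintro x ⟨hxH, hxp⟩
      exact (h2 hxH).resolve_right hxp
  · rintro ⟨⟨hp1, hp2⟩, ⟨hb1, hb2⟩, hh1, hh2⟩
    refine ⟨⟨?_, ?_⟩, ?_, ?_⟩
    · ext x
      simp only [Set.mem_inter_iff, Set.mem_union, Set.mem_singleton_iff,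
        Set.mem_empty_iff_false, iff_false, not_and]
      rintro hx (hJ | rfl)
      · exact Set.eq_empty_iff_forall_notMem.mp hb2 x ⟨hx, hJ⟩
      · exact hp2 hx
    · intro x hx
      by_cases h : x = p
      · exact Or.inr h
      · exact Or.inl (hh2 ⟨hx, h⟩)
    · intro x hx
      exact ⟨hb1 hx, fun he => hp1 (he ▸ hx)⟩
    · ext x
      simp only [Set.mem_inter_iff, Set.mem_diff, Set.mem_singleton_iff,
        Set.mem_empty_iff_false, iff_false, not_and]
      intro hxH hxI
      exact fun hxp => Set.eq_empty_iff_forall_notMem.mp hh1 x ⟨⟨hxH, hxp⟩, hxI⟩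
end

section
/- Let ⋄ be a belief update operator on propositional knowledge bases satisfying (B1) mod(ℬ ⋄ 𝒰) ⊆ mod(𝒰), (B2.1) mod(ℬ) ∩ mod(𝒰) ⊆ mod(ℬ ⋄ 𝒰), and (B4) syntax-independence (if mod(ℬ) = mod(𝒞) and mod(𝒰) = mod(𝒱) then mod(ℬ ⋄ 𝒰) = mod(𝒞 ⋄ 𝒱)). Then there exists an exception function ε such that for every ε-based update operator ⊕ and all finite sequences 𝒟 of knowledge bases, mod(⟐𝒟) = mod(⨁𝒟), where ⟐ and ⨁ are the iterated applications of ⋄ and ⊕ starting from the empty knowledge base. -/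
/-- Models of a set of formulas, given the model sets of individual formulas. -/
def models {V Formula : Type} (md : Formula → Set (Set V)) (B : Set Formula) :
    Set (Set V) :=
  {I | ∀ φ ∈ B, I ∈ md φ}

/-- The set-of-sets-of-models characterization ⟦ℬ⟧ = {mod(φ) : φ ∈ ℬ}. -/
def modr {V Formula : Type} (md : Formula → Set (Set V)) (B : Finset Formula) :
    Set (Set (Set V)) :=
  md '' ↑B

/-- Any update operator satisfying (B1), (B2.1) and (B4) is captured by some
exception function: every exception-based operator for it agrees with it on the
models of every iterated update sequence. -/
theorem stmt18 {V Formula : Type} [Fintype V]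
    (md : Formula → Set (Set V))
    (hexpr : ∀ M : Set (Set V), ∃ φ : Formula, md φ = M)
    (dia : Finset Formula → Finset Formula → Finset Formula)
    (hB1 : ∀ B U : Finset Formula, models md ↑(dia B U) ⊆ models md ↑U)
    (hB21 : ∀ B U : Finset Formula,
      models md ↑B ∩ models md ↑U ⊆ models md ↑(dia B U))
    (hB4 : ∀ B C U W : Finset Formula,
      models md ↑B = models md ↑C → models md ↑U = models md ↑W →
      models md ↑(dia B U) = models md ↑(dia C W)) :
    ∃ ε : Set (Set V) → Set (Set (Set V)) → Set (Set (Set V)) → Set (Set V),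
      ∀ op : Finset Formula → Finset Formula → Finset Formula,
        (∀ B U : Finset Formula,
          modr md (op B U) =
            (fun φ => md φ ∪ ε (md φ) (modr md B) (modr md U)) '' (↑B : Set Formula)
              ∪ modr md U) →
        ∀ D : List (Finset Formula),
          models md ↑(D.foldl dia ∅) = models md ↑(D.foldl op ∅) := by
  classical
  choose ph hph using hexpr
  refine ⟨fun _ SB SU =>
    models md ↑(dia {ph (⋂₀ SB)} {ph (⋂₀ SU)}), fun op hop => ?_⟩
  have hsingle : ∀ X : Set (Set V), models md ↑({ph X} : Finset Formula) = X := by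
    intro X
    ext I
    simp [models, hph]
  have hsInter : ∀ B : Finset Formula, ⋂₀ (modr md B) = models md ↑B := by
    intro B; ext I; simp [modr, models]
  have key : ∀ B C U : Finset Formula, models md ↑B = models md ↑C →
      models md ↑(dia B U) = models md ↑(op C U) := by
    intro B C U hBC
    set MD := models md ↑(dia B U) with hMD
    have hE : models md ↑(dia {ph (⋂₀ modr md C)} {ph (⋂₀ modr md U)}) = MD := by
      refine hB4 _ B _ U ?_ ?_
      · rw [hsInter, hsingle]; exact hBC.symm
      · rw [hsInter, hsingle]
    have h1 : models md ↑(op C U) = ⋂₀ (modr md (op C U)) := (hsInter _).symm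
    rw [h1, hop, Set.sInter_union, hsInter]
    have h2 : ⋂₀ ((fun φ => md φ ∪
        models md ↑(dia {ph (⋂₀ modr md C)} {ph (⋂₀ modr md U)})) '' (↑C : Set Formula))
        = models md ↑C ∪ MD := by
      ext x
      simp only [Set.mem_sInter, Set.mem_image, Set.mem_union, hE]
      constructor
      · intro h
        by_cases hx : x ∈ MD
        · exact Or.inr hx
        · refine Or.inl ?_
          intro φ hφ
          rcases h _ ⟨φ, hφ, rfl⟩ with h' | h'
          · exact h'
          · exact absurd h' hx
      · rintro (h | h) S ⟨φ, hφ, rfl⟩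
        · exact Or.inl (h φ hφ)
        · exact Or.inr h
    rw [h2]
    apply Set.Subset.antisymm
    · intro x hx
      exact ⟨Or.inr hx, hB1 B U hx⟩
    · rintro x ⟨hx1 | hx1, hx2⟩
      · exact hB21 B U ⟨hBC ▸ hx1, hx2⟩
      · exact hx1
  have main : ∀ D : List (Finset Formula), ∀ B C : Finset Formula,
      models md ↑B = models md ↑C →
      models md ↑(D.foldl dia B) = models md ↑(D.foldl op C) := by
    intro D
    induction D with
    | nil => intro B C h; exact h
    | cons U D ih => intro B C h; exact ih _ _ (key B C U h)
  intro D
  exact main D ∅ ∅ rfl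
end
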